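/- For every p > 0, as A → 0⁺, J₁(A) ~ (4Bp/(3(2p+3)))·A^{−3/(2p)}; that is, lim_{A→0⁺} A^{3/(2p)} J₁(A) = 4Bp/(3(2p+3)), where B = Σ_{m=1}^∞ m^{−3}. -/

import Mathlib

/-!
Write `q = 2p`, `w_A(j,l) = (1 - A((j+1)(l+1))^q)₊` and `(j+l+1)² = (j+1)² + (l+1)² + (2jl - 1)`.
By symmetry the two squares contribute the same sum `Σ_{m,n} (n+1)² w_A(m,n)`. For fixed `m`,
with `c = A(m+1)^q`, the inner sum satisfies `c^{3/q} Σ_n (n+1)² (1 - c(n+1)^q)₊ ≤ 1`, and as a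
Riemann sum it tends to `∫₀¹ y²(1 - y^q) dy = 1/3 - 1/(q+3)`. Since
`A^{3/q} Σ_{m,n} (n+1)² w_A = Σ_m (m+1)⁻³ · c^{3/q} Σ_n …`, dominated convergence gives the
limit `(1/3 - 1/(q+3)) B`. The cross term is `O(ab)` (`a = j+1`, `b = l+1`) on the support
`ab < A^{-1/q}`, hence at most `A^{-5/(2q)} Σ (ab)^{-3/2} = o(A^{-3/q})`.
-/

open Filter Topology

/-- The index set `Γ = {(j,l) : j,l ∈ ℤ₊}`. -/
abbrev Idx : Type := ℕ × ℕ

noncomputable section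

/-- The sequence `a_ν = ((j+1)(l+1))^p` for `ν = (j,l)`. -/
def aT (p : ℝ) (ν : Idx) : ℝ := (((ν.1 : ℝ) + 1) * ((ν.2 : ℝ) + 1)) ^ p

/-- The sequence `σ_ν = (j+l+1)^{1/2}` for `ν = (j,l)`. -/
def sigT (ν : Idx) : ℝ := ((ν.1 : ℝ) + (ν.2 : ℝ) + 1) ^ ((1 : ℝ) / 2)

/-- The constant `B = Σ_{m=1}^∞ m^{−3}`. -/
def Bsum : ℝ := ∑' m : ℕ, 1 / ((m : ℝ) + 1) ^ 3

/-- `J₁(A) = Σ_{ν∈Γ} σ_ν⁴ (1 − A a_ν²)₊`. -/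
def J1fun (p A : ℝ) : ℝ :=
  ∑' ν : Idx, sigT ν ^ 4 * max (1 - A * aT p ν ^ 2) 0

open Finset

lemma rpow_neg_one_div_rpow {q c : ℝ} (hq : 0 < q) (hc : 0 < c) :
    (c ^ (-1 / q)) ^ q = c⁻¹ := by
  rw [← Real.rpow_mul hc.le, div_mul_cancel₀ _ hq.ne', Real.rpow_neg_one]

lemma mul_rpow_le_one_iff {q c y : ℝ} (hq : 0 < q) (hc : 0 < c) (hy : 0 ≤ y) :
    c * y ^ q ≤ 1 ↔ y ≤ c ^ (-1 / q) := by
  rw [← Real.rpow_le_rpow_iff hy (by positivity) hq, rpow_neg_one_div_rpow hq hc, ← one_div,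
    le_div_iff₀' hc]

lemma mul_rpow_lt_one_iff {q c y : ℝ} (hq : 0 < q) (hc : 0 < c) (hy : 0 ≤ y) :
    c * y ^ q < 1 ↔ y < c ^ (-1 / q) := by
  rw [← Real.rpow_lt_rpow_iff hy (by positivity) hq, rpow_neg_one_div_rpow hq hc, ← one_div,
    lt_div_iff₀' hc]

lemma tendsto_const_mul_nhdsGT_zero {c : ℝ} (hc : 0 < c) :
    Tendsto (fun A : ℝ => c * A) (𝓝[>] 0) (𝓝[>] 0) :=
  tendsto_iff_comap.2 (comap_mulLeft_nhdsGT_zero hc).ge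

def powSum (r : ℝ) (N : ℕ) : ℝ := ∑ n ∈ range N, ((n : ℝ) + 1) ^ r

lemma natCast_rpow_div_le_powSum {r : ℝ} (hr : 0 ≤ r) (N : ℕ) :
    (N : ℝ) ^ (r + 1) / (r + 1) ≤ powSum r N := by
  have hmono : MonotoneOn (fun x : ℝ => x ^ r) (Set.Icc 0 (0 + N)) := fun x hx y _ hxy =>
    Real.rpow_le_rpow hx.1 hxy hr
  have := hmono.integral_le_sum
  rw [zero_add, integral_rpow (Or.inl (by linarith)), Real.zero_rpow (by positivity),
    sub_zero] at this
  simpa [powSum, add_comm] using this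

lemma powSum_le_add_one_rpow_div {r : ℝ} (hr : 0 ≤ r) (N : ℕ) :
    powSum r N ≤ ((N : ℝ) + 1) ^ (r + 1) / (r + 1) := by
  have hmono : MonotoneOn (fun x : ℝ => x ^ r) (Set.Icc 1 (1 + N)) := fun x hx y _ hxy =>
    Real.rpow_le_rpow (zero_le_one.trans hx.1) hxy hr
  have := hmono.sum_le_integral
  rw [integral_rpow (Or.inl (by linarith)), Real.one_rpow] at this
  calc powSum r N ≤ (((1 : ℝ) + N) ^ (r + 1) - 1) / (r + 1) := by
        simpa [powSum, add_comm] using this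
    _ ≤ ((N : ℝ) + 1) ^ (r + 1) / (r + 1) := by
      rw [add_comm (1 : ℝ)]; gcongr; linarith

lemma powSum_le_natCast_rpow {r : ℝ} (hr : 0 ≤ r) (N : ℕ) :
    powSum r N ≤ (N : ℝ) ^ (r + 1) := by
  calc powSum r N ≤ ∑ _n ∈ range N, (N : ℝ) ^ r := by
        refine sum_le_sum fun n hn => Real.rpow_le_rpow (by positivity) ?_ hr
        exact_mod_cast mem_range.1 hn
    _ = (N : ℝ) ^ (r + 1) := by
      rw [sum_const, card_range, nsmul_eq_mul, Real.rpow_add_one' (by positivity) (by positivity)]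
      ring

lemma powSum_nonneg (r : ℝ) (N : ℕ) : 0 ≤ powSum r N :=
  sum_nonneg fun _ _ => by positivity

lemma tendsto_powSum_floor_div {r : ℝ} (hr : 0 ≤ r) :
    Tendsto (fun x : ℝ => powSum r ⌊x⌋₊ / x ^ (r + 1)) atTop (𝓝 (1 / (r + 1))) := by
  have hlim : ∀ {u : ℝ → ℝ}, Tendsto u atTop (𝓝 1) →
      Tendsto (fun x => u x ^ (r + 1) / (r + 1)) atTop (𝓝 (1 / (r + 1))) := fun hu => by
    simpa using (hu.rpow_const (Or.inl one_ne_zero)).div_const (r + 1)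
  have hfloor : Tendsto (fun x : ℝ => (⌊x⌋₊ : ℝ) / x) atTop (𝓝 1) :=
    tendsto_nat_floor_div_atTop
  have hfloor' : Tendsto (fun x : ℝ => ((⌊x⌋₊ : ℝ) + 1) / x) atTop (𝓝 1) := by
    simpa [add_div] using hfloor.add tendsto_inv_atTop_zero
  refine tendsto_of_tendsto_of_tendsto_of_le_of_le' (hlim hfloor) (hlim hfloor') ?_ ?_ <;>
  filter_upwards [eventually_gt_atTop 0] with x hx
  · rw [Real.div_rpow (by positivity) hx.le, div_right_comm]
    exact div_le_div_of_nonneg_right (natCast_rpow_div_le_powSum hr _) (by positivity)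
  · rw [Real.div_rpow (by positivity) hx.le, div_right_comm]
    exact div_le_div_of_nonneg_right (powSum_le_add_one_rpow_div hr _) (by positivity)

def cutoffSum (r q c : ℝ) : ℝ :=
  ∑' n : ℕ, ((n : ℝ) + 1) ^ r * max (1 - c * ((n : ℝ) + 1) ^ q) 0

lemma cutoffSum_eq_powSum_sub {r q c : ℝ} (hq : 0 < q) (hc : 0 < c) :
    cutoffSum r q c =
      powSum r ⌊c ^ (-1 / q)⌋₊ - c * powSum (r + q) ⌊c ^ (-1 / q)⌋₊ := by
  set N := ⌊c ^ (-1 / q)⌋₊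
  have hlt : ∀ n : ℕ, n < N ↔ c * ((n : ℝ) + 1) ^ q ≤ 1 := fun n => by
    rw [mul_rpow_le_one_iff hq hc (by positivity), ← Nat.cast_add_one, ← Nat.le_floor_iff
      (by positivity)]
    rfl
  rw [cutoffSum, tsum_eq_sum (s := range N), powSum, powSum, mul_sum, ← sum_sub_distrib]
  · refine sum_congr rfl fun n hn => ?_
    rw [max_eq_left (sub_nonneg.2 ((hlt n).1 (mem_range.1 hn))),
      Real.rpow_add (by positivity)]
    ring
  · intro n hn
    rw [mem_range, hlt, not_le] at hn
    rw [max_eq_right (by linarith), mul_zero]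

/-- `∫₀¹ yʳ (1 - y^q) dy`, the limit of the Riemann sums `c^((r+1)/q) * cutoffSum r q c`. -/
def cutoffLimit (r q : ℝ) : ℝ := 1 / (r + 1) - 1 / (r + q + 1)

lemma rpow_mul_cutoffSum_eq {r q c : ℝ} (hq : 0 < q) (hc : 0 < c) :
    c ^ ((r + 1) / q) * cutoffSum r q c =
      powSum r ⌊c ^ (-1 / q)⌋₊ / (c ^ (-1 / q)) ^ (r + 1)
        - powSum (r + q) ⌊c ^ (-1 / q)⌋₊ / (c ^ (-1 / q)) ^ (r + q + 1) := by
  have hpow : ∀ s : ℝ, (c ^ (-1 / q)) ^ s = (c ^ (s / q))⁻¹ := fun s => by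
    rw [← Real.rpow_mul hc.le, ← Real.rpow_neg hc.le]; ring_nf
  have hsplit : c ^ ((r + q + 1) / q) = c ^ ((r + 1) / q) * c := by
    rw [← Real.rpow_add_one hc.ne']; congr 1; field_simp; ring
  rw [cutoffSum_eq_powSum_sub hq hc, hpow, hpow, hsplit]
  field_simp

lemma tendsto_rpow_mul_cutoffSum {r q : ℝ} (hr : 0 ≤ r) (hq : 0 < q) :
    Tendsto (fun c => c ^ ((r + 1) / q) * cutoffSum r q c) (𝓝[>] 0)
      (𝓝 (cutoffLimit r q)) := by
  have hG := ((tendsto_powSum_floor_div hr).sub (tendsto_powSum_floor_div (r := r + q)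
    (by linarith))).comp (tendsto_rpow_neg_nhdsGT_zero (y := -1 / q) (by
      rw [neg_div]; exact neg_neg_of_pos (by positivity)))
  refine hG.congr' ?_
  filter_upwards [self_mem_nhdsWithin] with c hc
  exact (rpow_mul_cutoffSum_eq hq hc).symm

lemma cutoffSum_nonneg (r q c : ℝ) : 0 ≤ cutoffSum r q c :=
  tsum_nonneg fun _ => by positivity

lemma rpow_mul_cutoffSum_le_one {r q c : ℝ} (hr : 0 ≤ r) (hq : 0 < q) (hc : 0 < c) :
    c ^ ((r + 1) / q) * cutoffSum r q c ≤ 1 := by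
  set x := c ^ (-1 / q)
  have hx : 0 < x := by positivity
  rw [rpow_mul_cutoffSum_eq hq hc, sub_le_iff_le_add]
  refine le_add_of_le_of_nonneg ?_ (by have := powSum_nonneg (r + q) ⌊x⌋₊; positivity)
  rw [div_le_one (by positivity)]
  exact (powSum_le_natCast_rpow hr _).trans (Real.rpow_le_rpow (by positivity) (Nat.floor_le hx.le)
    (by linarith))

def cutoff (q A : ℝ) (ν : ℕ × ℕ) : ℝ :=
  max (1 - A * (((ν.1 : ℝ) + 1) * ((ν.2 : ℝ) + 1)) ^ q) 0

section Cutoff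

variable {q A : ℝ}

lemma cutoff_nonneg (ν : ℕ × ℕ) : 0 ≤ cutoff q A ν := le_max_right _ _

lemma cutoff_le_one (hA : 0 ≤ A) (ν : ℕ × ℕ) : cutoff q A ν ≤ 1 :=
  max_le (sub_le_self _ (by positivity)) zero_le_one

lemma cutoff_swap (ν : ℕ × ℕ) : cutoff q A ν.swap = cutoff q A ν := by
  simp only [cutoff, Prod.fst_swap, Prod.snd_swap, mul_comm ((ν.2 : ℝ) + 1)]

lemma mul_lt_of_cutoff_ne_zero (hq : 0 < q) (hA : 0 < A) {ν : ℕ × ℕ}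
    (h : cutoff q A ν ≠ 0) :
    ((ν.1 : ℝ) + 1) * ((ν.2 : ℝ) + 1) < A ^ (-1 / q) := by
  rw [← mul_rpow_lt_one_iff hq hA (by positivity)]
  by_contra! hge
  exact h (max_eq_right (by linarith))

lemma summable_mul_cutoff (hq : 0 < q) (hA : 0 < A) (f : ℕ × ℕ → ℝ) :
    Summable fun ν => f ν * cutoff q A ν := by
  set M := ⌈A ^ (-1 / q)⌉₊
  refine summable_of_ne_finset_zero (s := range M ×ˢ range M) fun ν hν => ?_
  by_contra hne
  have hlt := mul_lt_of_cutoff_ne_zero hq hA (right_ne_zero_of_mul hne)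
  have hM := Nat.le_ceil (A ^ (-1 / q))
  have h1 : (0 : ℝ) ≤ ν.1 := ν.1.cast_nonneg
  have h2 : (0 : ℝ) ≤ ν.2 := ν.2.cast_nonneg
  have hν1 : (ν.1 : ℝ) < M := by nlinarith
  have hν2 : (ν.2 : ℝ) < M := by nlinarith
  exact hν (mem_product.2
    ⟨mem_range.2 (by exact_mod_cast hν1), mem_range.2 (by exact_mod_cast hν2)⟩)

end Cutoff

lemma rpow_mul_tsum_cutoff_eq {r q A : ℝ} (hq : 0 < q) (hA : 0 < A) (m : ℕ) :
    A ^ ((r + 1) / q) * ∑' n : ℕ, ((n : ℝ) + 1) ^ r * cutoff q A (m, n) =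
      ((m : ℝ) + 1) ^ (-(r + 1)) *
        ((((m : ℝ) + 1) ^ q * A) ^ ((r + 1) / q) * cutoffSum r q (((m : ℝ) + 1) ^ q * A)) := by
  have hm : (0 : ℝ) < (m : ℝ) + 1 := by positivity
  have hpow : (((m : ℝ) + 1) ^ q * A) ^ ((r + 1) / q) =
      ((m : ℝ) + 1) ^ (r + 1) * A ^ ((r + 1) / q) := by
    rw [Real.mul_rpow (by positivity) hA.le, ← Real.rpow_mul hm.le, mul_div_cancel₀ _ hq.ne']
  have hcut : ∀ n : ℕ,
      cutoff q A (m, n) = max (1 - ((m : ℝ) + 1) ^ q * A * ((n : ℝ) + 1) ^ q) 0 :=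
    fun n => by rw [cutoff, Real.mul_rpow hm.le (by positivity)]; ring_nf
  rw [hpow, cutoffSum, ← mul_assoc, ← mul_assoc, ← Real.rpow_add hm, neg_add_cancel,
    Real.rpow_zero, one_mul]
  simp only [hcut]

lemma tendsto_rpow_mul_tsum_cutoff {r q : ℝ} (hr : 0 < r) (hq : 0 < q) :
    Tendsto (fun A => A ^ ((r + 1) / q) * ∑' ν : ℕ × ℕ, ((ν.2 : ℝ) + 1) ^ r * cutoff q A ν)
      (𝓝[>] 0) (𝓝 (cutoffLimit r q * ∑' m : ℕ, ((m : ℝ) + 1) ^ (-(r + 1)))) := by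
  have hsum : Summable fun m : ℕ => ((m : ℝ) + 1) ^ (-(r + 1)) := by
    simpa using (summable_nat_add_iff 1).2 (Real.summable_nat_rpow.2 (by linarith : -(r + 1) < -1))
  have hlim : ∀ m : ℕ, Tendsto (fun A => ((m : ℝ) + 1) ^ (-(r + 1)) *
      ((((m : ℝ) + 1) ^ q * A) ^ ((r + 1) / q) * cutoffSum r q (((m : ℝ) + 1) ^ q * A)))
      (𝓝[>] 0) (𝓝 (((m : ℝ) + 1) ^ (-(r + 1)) * cutoffLimit r q)) := fun m =>
    ((tendsto_rpow_mul_cutoffSum hr.le hq).comp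
      (tendsto_const_mul_nhdsGT_zero (c := ((m : ℝ) + 1) ^ q) (by positivity))).const_mul _
  have hbound : ∀ᶠ A in 𝓝[>] (0 : ℝ), ∀ m : ℕ, ‖((m : ℝ) + 1) ^ (-(r + 1)) *
      ((((m : ℝ) + 1) ^ q * A) ^ ((r + 1) / q) * cutoffSum r q (((m : ℝ) + 1) ^ q * A))‖
      ≤ ((m : ℝ) + 1) ^ (-(r + 1)) := by
    filter_upwards [self_mem_nhdsWithin] with A (hA : 0 < A) m
    have hc : 0 < ((m : ℝ) + 1) ^ q * A := by positivity
    rw [Real.norm_of_nonneg (by have := cutoffSum_nonneg r q (((m : ℝ) + 1) ^ q * A); positivity)]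
    exact mul_le_of_le_one_right (by positivity) (rpow_mul_cutoffSum_le_one hr.le hq hc)
  rw [mul_comm, ← tsum_mul_right]
  refine (tendsto_tsum_of_dominated_convergence hsum hlim hbound).congr' ?_
  filter_upwards [self_mem_nhdsWithin] with A (hA : 0 < A)
  rw [(summable_mul_cutoff hq hA _).tsum_prod' (summable_mul_cutoff hq hA _).prod_factor,
    ← tsum_mul_left]
  exact tsum_congr fun m => (rpow_mul_tsum_cutoff_eq hq hA m).symm

lemma summable_rpow_neg_three_halves_mul :
    Summable fun ν : ℕ × ℕ =>
      ((ν.1 : ℝ) + 1) ^ (-(3 / 2) : ℝ) * ((ν.2 : ℝ) + 1) ^ (-(3 / 2) : ℝ) := by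
  have h : Summable fun n : ℕ => ((n : ℝ) + 1) ^ (-(3 / 2) : ℝ) := by
    simpa using (summable_nat_add_iff 1).2
      (Real.summable_nat_rpow.2 (by norm_num : -(3 / 2) < (-1 : ℝ)))
  exact h.mul_of_nonneg h (fun _ => by positivity) (fun _ => by positivity)

lemma norm_mul_cutoff_le {q A C : ℝ} (hq : 0 < q) (hA : 0 < A) {g : ℕ × ℕ → ℝ}
    (hg : ∀ ν, |g ν| ≤ C * (((ν.1 : ℝ) + 1) * ((ν.2 : ℝ) + 1))) (ν : ℕ × ℕ) :
    ‖g ν * cutoff q A ν‖ ≤ C * (A ^ (-1 / q)) ^ (5 / 2 : ℝ) *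
      (((ν.1 : ℝ) + 1) ^ (-(3 / 2) : ℝ) * ((ν.2 : ℝ) + 1) ^ (-(3 / 2) : ℝ)) := by
  set y := ((ν.1 : ℝ) + 1) * ((ν.2 : ℝ) + 1)
  have hy : 0 < y := by positivity
  have hC : 0 ≤ C := by simpa using (abs_nonneg _).trans (hg (0, 0))
  rw [← Real.mul_rpow (by positivity) (by positivity)]
  by_cases h0 : cutoff q A ν = 0
  · rw [h0, mul_zero, norm_zero]; positivity
  have hsplit : y = y ^ (5 / 2 : ℝ) * y ^ (-(3 / 2) : ℝ) := by
    rw [← Real.rpow_add hy]; norm_num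
  rw [norm_mul, Real.norm_eq_abs, Real.norm_of_nonneg (cutoff_nonneg ν), mul_assoc]
  calc |g ν| * cutoff q A ν ≤ C * y * 1 :=
        mul_le_mul (hg ν) (cutoff_le_one hA.le ν) (cutoff_nonneg ν) (by positivity)
    _ = C * (y ^ (5 / 2 : ℝ) * y ^ (-(3 / 2) : ℝ)) := by rw [mul_one, ← hsplit]
    _ ≤ C * ((A ^ (-1 / q)) ^ (5 / 2 : ℝ) * y ^ (-(3 / 2) : ℝ)) := by
        gcongr
        exact (mul_lt_of_cutoff_ne_zero hq hA h0).le

lemma tendsto_rpow_mul_tsum_mul_cutoff_zero {q C : ℝ} (hq : 0 < q) {g : ℕ × ℕ → ℝ}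
    (hg : ∀ ν, |g ν| ≤ C * (((ν.1 : ℝ) + 1) * ((ν.2 : ℝ) + 1))) :
    Tendsto (fun A => A ^ (3 / q) * ∑' ν, g ν * cutoff q A ν) (𝓝[>] 0) (𝓝 0) := by
  set Z :=
    ∑' ν : ℕ × ℕ, ((ν.1 : ℝ) + 1) ^ (-(3 / 2) : ℝ) * ((ν.2 : ℝ) + 1) ^ (-(3 / 2) : ℝ)
  have hlim : Tendsto (fun A : ℝ => C * Z * A ^ (1 / (2 * q))) (𝓝[>] 0) (𝓝 0) := by
    have h := ((Real.continuousAt_rpow_const 0 (1 / (2 * q)) (Or.inr (by positivity))).tendsto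
      |>.mono_left (nhdsWithin_le_nhds (s := Set.Ioi 0))).const_mul (C * Z)
    rwa [Real.zero_rpow (by positivity), mul_zero] at h
  refine squeeze_zero_norm' ?_ hlim
  filter_upwards [self_mem_nhdsWithin] with A (hA : 0 < A)
  have hexp : A ^ (3 / q) * (A ^ (-1 / q)) ^ (5 / 2 : ℝ) = A ^ (1 / (2 * q)) := by
    rw [← Real.rpow_mul hA.le, ← Real.rpow_add hA]; congr 1; field_simp; ring
  rw [norm_mul, Real.norm_of_nonneg (by positivity)]
  calc A ^ (3 / q) * ‖∑' ν, g ν * cutoff q A ν‖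
      ≤ A ^ (3 / q) * (C * (A ^ (-1 / q)) ^ (5 / 2 : ℝ) * Z) := by
        gcongr
        exact tsum_of_norm_bounded (summable_rpow_neg_three_halves_mul.hasSum.mul_left _)
          (norm_mul_cutoff_le hq hA hg)
    _ = C * Z * A ^ (1 / (2 * q)) := by rw [← hexp]; ring

lemma sigT_pow_four (ν : Idx) : sigT ν ^ 4 = ((ν.1 : ℝ) + ν.2 + 1) ^ 2 := by
  rw [sigT, ← Real.rpow_mul_natCast (by positivity)]
  norm_num

lemma aT_sq (p : ℝ) (ν : Idx) :
    aT p ν ^ 2 = (((ν.1 : ℝ) + 1) * ((ν.2 : ℝ) + 1)) ^ (2 * p) := by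
  rw [aT, ← Real.rpow_mul_natCast (by positivity)]
  push_cast
  ring_nf

lemma J1fun_eq_two_mul_tsum_add_tsum {p A : ℝ} (hp : 0 < p) (hA : 0 < A) :
    J1fun p A = 2 * ∑' ν : ℕ × ℕ, ((ν.2 : ℝ) + 1) ^ (2 : ℝ) * cutoff (2 * p) A ν
      + ∑' ν : ℕ × ℕ, (2 * (ν.1 : ℝ) * ν.2 - 1) * cutoff (2 * p) A ν := by
  have hq : 0 < 2 * p := by positivity
  have hswap : ∑' ν : ℕ × ℕ, ((ν.1 : ℝ) + 1) ^ (2 : ℝ) * cutoff (2 * p) A ν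
      = ∑' ν : ℕ × ℕ, ((ν.2 : ℝ) + 1) ^ (2 : ℝ) * cutoff (2 * p) A ν := by
    rw [← (Equiv.prodComm ℕ ℕ).tsum_eq]
    simp only [Equiv.prodComm_apply, Prod.fst_swap, cutoff_swap]
  have hs := summable_mul_cutoff hq hA
  calc J1fun p A = ∑' ν : ℕ × ℕ, (((ν.1 : ℝ) + 1) ^ (2 : ℝ) * cutoff (2 * p) A ν
        + ((ν.2 : ℝ) + 1) ^ (2 : ℝ) * cutoff (2 * p) A ν
        + (2 * (ν.1 : ℝ) * ν.2 - 1) * cutoff (2 * p) A ν) := by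
        refine tsum_congr fun ν => ?_
        rw [sigT_pow_four, aT_sq, Real.rpow_two, Real.rpow_two, cutoff]
        ring
    _ = _ := by
        rw [((hs _).add (hs _)).tsum_add (hs _), (hs _).tsum_add (hs _), hswap]
        ring

/-- For every `p > 0`, `J₁(A) ~ (4Bp/(3(2p+3))) A^{−3/(2p)}` as `A → 0⁺`. -/
theorem J1fun_asymptotics (p : ℝ) (hp : 0 < p) :
    Tendsto (fun A : ℝ => A ^ (3 / (2 * p)) * J1fun p A) (𝓝[>] (0 : ℝ))
      (𝓝 (4 * Bsum * p / (3 * (2 * p + 3)))) := by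
  have hq : 0 < 2 * p := by positivity
  have hmain := tendsto_rpow_mul_tsum_cutoff two_pos hq
  have hrem := tendsto_rpow_mul_tsum_mul_cutoff_zero (C := 2) hq
    (g := fun ν => 2 * (ν.1 : ℝ) * ν.2 - 1) fun ν => by
      have h1 : (0 : ℝ) ≤ ν.1 := ν.1.cast_nonneg
      have h2 : (0 : ℝ) ≤ ν.2 := ν.2.cast_nonneg
      rw [abs_le]; constructor <;> nlinarith
  have hB : ∑' m : ℕ, ((m : ℝ) + 1) ^ (-((2 : ℝ) + 1)) = Bsum :=
    tsum_congr fun m => by rw [Real.rpow_neg (by positivity), one_div]; norm_num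
  have hL : 2 * (cutoffLimit 2 (2 * p) * Bsum) + 0 = 4 * Bsum * p / (3 * (2 * p + 3)) := by
    unfold cutoffLimit; field_simp; ring
  rw [← hL, ← hB]
  refine ((hmain.const_mul 2).add hrem).congr' ?_
  filter_upwards [self_mem_nhdsWithin] with A (hA : 0 < A)
  rw [J1fun_eq_two_mul_tsum_add_tsum hp hA, show ((2 : ℝ) + 1) = 3 by norm_num]
  ring

end
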